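/- arXiv:1907.13585 — 2 statements merged into one kernel-verified Lean document; each statement's English description precedes it below -/
import Mathlib

section
/- Let T ∈ (0,∞) and T* ∈ (0,∞) with T* ∉ ℚ·T, and let (T*_n)_{n∈ℕ} be a real sequence with T*_n − T*_{n−1} → T* as n → ∞. Then for every ε > 0 there exist m, n ∈ ℕ such that |T*_n − m·T| < ε. -/
/-!
Project to the circle `ℝ / Tℤ`, where `T*` generates a dense subgroup since `T* / T` is irrational.
By compactness there is a uniform `K` such that every point of the circle comes within `ε / 2` of
`0` after adding at most `K` copies of `T*`. Far enough out, `T*_{n+k} - T*_n` differs from `k T*`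
by less than `ε / 2` for all `k ≤ K`, so some `T*_{n+k}` lies within `ε` of `ℤT`; as `T*_n → ∞`,
that multiple of `T` is a natural one.
-/

open Filter Topology Set

section

variable {G : Type*} [SeminormedAddCommGroup G]

theorem norm_sub_sub_nsmul_le_of_norm_sub_le {f : ℕ → G} {u : G} {δ : ℝ} {b : ℕ}
    (h : ∀ n ≥ b, ‖f (n + 1) - f n - u‖ ≤ δ) (j : ℕ) :
    ‖f (b + j) - f b - j • u‖ ≤ j * δ := by
  induction j with
  | zero => simp
  | succ j ih =>
    calc ‖f (b + (j + 1)) - f b - (j + 1) • u‖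
        = ‖(f (b + j + 1) - f (b + j) - u) + (f (b + j) - f b - j • u)‖ := by
          rw [succ_nsmul, ← add_assoc]; congr 1; abel
      _ ≤ δ + j * δ := norm_add_le_of_le (h _ (Nat.le_add_right b j)) ih
      _ = (j + 1 : ℕ) * δ := by push_cast; ring

/-- Finitely many of the open sets `{y | ‖y + k • u‖ < c}`, `k : ℤ`, cover the compact `G`, so
`|k| ≤ K` suffices; shifting `y` by `K • u` turns these `k` into natural numbers `≤ 2 * K`. -/
theorem exists_bound_norm_add_nsmul_lt_of_denseRange_zsmul [CompactSpace G] {u : G}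
    (hu : DenseRange (· • u : ℤ → G)) {c : ℝ} (hc : 0 < c) :
    ∃ K : ℕ, ∀ y : G, ∃ k ≤ K, ‖y + k • u‖ < c := by
  obtain ⟨F, hF⟩ := isCompact_univ.elim_finite_subcover (fun k : ℤ => {y : G | ‖y + k • u‖ < c})
    (fun k => isOpen_lt (by fun_prop) continuous_const) fun y _ => by
      obtain ⟨k, hk⟩ := hu.exists_dist_lt (-y) hc
      rw [dist_comm, dist_eq_norm, sub_neg_eq_add, add_comm] at hk
      exact mem_iUnion.2 ⟨k, hk⟩
  set K := F.sup Int.natAbs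
  refine ⟨2 * K, fun y => ?_⟩
  obtain ⟨k, hkF, hk⟩ := mem_iUnion₂.1 (hF (mem_univ (y + (K : ℤ) • u)))
  have hkK : k.natAbs ≤ K := Finset.le_sup hkF
  refine ⟨(k + K).toNat, by omega, ?_⟩
  rwa [← natCast_zsmul, Int.toNat_of_nonneg (by omega), add_zsmul, add_comm (k • u),
    ← add_assoc]

theorem frequently_norm_lt_of_tendsto_sub [CompactSpace G] {f : ℕ → G} {u : G}
    (hu : DenseRange (· • u : ℤ → G)) (hf : Tendsto (fun n => f (n + 1) - f n) atTop (𝓝 u))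
    {ε : ℝ} (hε : 0 < ε) : ∃ᶠ n in atTop, ‖f n‖ < ε := by
  obtain ⟨K, hK⟩ := exists_bound_norm_add_nsmul_lt_of_denseRange_zsmul hu (half_pos hε)
  set δ := ε / (2 * (K + 1))
  obtain ⟨N, hN⟩ := eventually_atTop.1
    ((tendsto_iff_norm_sub_tendsto_zero.1 hf).eventually (gt_mem_nhds (by positivity : 0 < δ)))
  refine frequently_atTop.2 fun N' => ?_
  set b := max N N'
  obtain ⟨k, hkK, hk⟩ := hK (f b)
  have herr := norm_sub_sub_nsmul_le_of_norm_sub_le (b := b)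
    (fun n hn => (hN n (le_of_max_le_left hn)).le) k
  have hkδ : k * δ < ε / 2 := by
    have : (k : ℝ) < K + 1 := by exact_mod_cast Nat.lt_succ_of_le hkK
    calc k * δ < (K + 1) * δ := by gcongr
      _ = ε / 2 := by simp only [δ]; field_simp
  refine ⟨b + k, le_add_right (le_max_right _ _), ?_⟩
  calc ‖f (b + k)‖ = ‖(f (b + k) - f b - k • u) + (f b + k • u)‖ := by congr 1; abel
    _ < ε / 2 + ε / 2 := (norm_add_le _ _).trans_lt (add_lt_add (herr.trans_lt hkδ) hk)
    _ = ε := add_halves ε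

end

theorem tendsto_atTop_of_tendsto_sub_nhds_pos {a : ℕ → ℝ} {s : ℝ} (hs : 0 < s)
    (h : Tendsto (fun n => a (n + 1) - a n) atTop (𝓝 s)) : Tendsto a atTop atTop := by
  obtain ⟨N, hN⟩ := eventually_atTop.1
    ((tendsto_iff_norm_sub_tendsto_zero.1 h).eventually (gt_mem_nhds (half_pos hs)))
  rw [← tendsto_add_atTop_iff_nat N]
  refine tendsto_atTop_mono (fun j => ?_) (tendsto_atTop_add_const_left _ (a N)
    (tendsto_natCast_atTop_atTop.atTop_mul_const (half_pos hs)))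
  have := norm_sub_sub_nsmul_le_of_norm_sub_le (fun n hn => (hN n hn).le) j
  rw [Real.norm_eq_abs, nsmul_eq_mul, add_comm N] at this
  linarith [(abs_le.1 this).1]

theorem AddCircle.exists_nat_abs_sub_mul_eq_norm {T x : ℝ} (hT : 0 ≤ T) (hx : 0 ≤ x) :
    ∃ m : ℕ, |x - m * T| = ‖(x : AddCircle T)‖ := by
  have : 0 ≤ round (T⁻¹ * x) := by rw [round_eq]; exact Int.floor_nonneg.2 (by positivity)
  exact ⟨(round (T⁻¹ * x)).toNat, by
    rw [AddCircle.norm_eq, ← Int.cast_natCast, Int.toNat_of_nonneg this]⟩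

/-- Perturbed Kronecker approximation (Lemma 4.2): if `T > 0`, `T* > 0` with `T*/T`
irrational, and the consecutive differences of the sequence `a` converge to `T*`,
then for every `ε > 0` there are `m n : ℕ` with `|a n - m * T| < ε`. -/
theorem stmt0 (T Tstar : ℝ) (hT : 0 < T) (hTstar : 0 < Tstar)
    (hirr : Irrational (Tstar / T)) (a : ℕ → ℝ)
    (hdiff : Filter.Tendsto (fun n => a (n + 1) - a n) Filter.atTop (nhds Tstar)) :
    ∀ ε > 0, ∃ m n : ℕ, |a n - m * T| < ε := by
  intro ε hε
  have : Fact (0 < T) := ⟨hT⟩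
  have hdense : DenseRange (· • (Tstar : AddCircle T) : ℤ → AddCircle T) :=
    AddCircle.denseRange_zsmul_coe_iff.2 hirr
  have hdiff' : Tendsto (fun n => (a (n + 1) : AddCircle T) - a n) atTop (𝓝 Tstar) := by
    simp only [← AddCircle.coe_sub]
    exact ((AddCircle.continuous_mk' T).tendsto _).comp hdiff
  obtain ⟨n, hn, ha⟩ := ((frequently_norm_lt_of_tendsto_sub hdense hdiff' hε).and_eventually
    ((tendsto_atTop_of_tendsto_sub_nhds_pos hTstar hdiff).eventually_ge_atTop 0)).exists
  obtain ⟨m, hm⟩ := AddCircle.exists_nat_abs_sub_mul_eq_norm hT.le ha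
  exact ⟨m, n, hm ▸ hn⟩
end

section
/- Let W₁, W₂ : ℝ^{N+L} → ℝ^{N+L} be C¹ vector fields and a₁, a₂ : ℝ^N → ℝ be C¹ functions. Define vector fields on ℝ^{N+L+N} by U_i(x,y,z) := a_i(z)·(W_i(x,y), 0_N) for i = 1,2. Then [U₁, U₂](x,y,z) = a₁(z)·a₂(z)·([W₁,W₂](x,y), 0_N). -/
/-!
Each field `Uᵢ = aᵢ(z) • (Wᵢ, 0)` has no `z`-component, while each coefficient `aᵢ` depends
only on `z`. So differentiating `Uᵢ` in the direction of `Uⱼ` never differentiates `aᵢ`: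
`DUᵢ (Uⱼ) = aⱼ aᵢ • (DWᵢ Wⱼ, 0)`, and the bracket is `a₁ a₂` times `([W₁, W₂], 0)`.
-/

/-- The Lie bracket `[V,W] = J_W V - J_V W` of vector fields. -/
noncomputable def lieBracket {E : Type*} [NormedAddCommGroup E] [NormedSpace ℝ E]
    (V W : E → E) (p : E) : E :=
  fderiv ℝ W p (V p) - fderiv ℝ V p (W p)

section

variable {E F G : Type*} [NormedAddCommGroup E] [NormedSpace ℝ E]
  [NormedAddCommGroup F] [NormedSpace ℝ F] [NormedAddCommGroup G] [NormedSpace ℝ G]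

theorem fderiv_smul_comp_fst_snd_apply_inl {a : F → ℝ} {V : E → G} {x : E} {z : F}
    (ha : DifferentiableAt ℝ a z) (hV : DifferentiableAt ℝ V x) (v : E) :
    fderiv ℝ (fun p : E × F => a p.2 • V p.1) (x, z) (v, 0) = a z • fderiv ℝ V x v := by
  have hc : HasFDerivAt (fun p : E × F => a p.2)
      ((fderiv ℝ a z).comp (ContinuousLinearMap.snd ℝ E F)) (x, z) :=
    ha.hasFDerivAt.comp (x, z) hasFDerivAt_snd
  have hf : HasFDerivAt (fun p : E × F => V p.1)
      ((fderiv ℝ V x).comp (ContinuousLinearMap.fst ℝ E F)) (x, z) :=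
    hV.hasFDerivAt.comp (x, z) hasFDerivAt_fst
  rw [(hc.fun_smul hf).fderiv]
  simp

theorem fderiv_prodMk_zero_apply {W : E → G} {x : E} (hW : DifferentiableAt ℝ W x) (v : E) :
    fderiv ℝ (fun y : E => (W y, (0 : F))) x v = (fderiv ℝ W x v, 0) := by
  rw [hW.fderiv_prodMk (differentiableAt_const 0)]
  simp

theorem lieBracket_smul_prodMk_zero {W₁ W₂ : E → E} {a₁ a₂ : F → ℝ} {x : E} {z : F}
    (hW₁ : DifferentiableAt ℝ W₁ x) (hW₂ : DifferentiableAt ℝ W₂ x)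
    (ha₁ : DifferentiableAt ℝ a₁ z) (ha₂ : DifferentiableAt ℝ a₂ z) :
    lieBracket (fun p : E × F => a₁ p.2 • (W₁ p.1, (0 : F)))
      (fun p : E × F => a₂ p.2 • (W₂ p.1, (0 : F))) (x, z)
      = (a₁ z * a₂ z) • (lieBracket W₁ W₂ x, (0 : F)) := by
  have hV₁ := hW₁.prodMk (differentiableAt_const (0 : F))
  have hV₂ := hW₂.prodMk (differentiableAt_const (0 : F))
  have hU₁ : a₁ z • (W₁ x, (0 : F)) = (a₁ z • W₁ x, 0) := by simp
  have hU₂ : a₂ z • (W₂ x, (0 : F)) = (a₂ z • W₂ x, 0) := by simp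
  rw [lieBracket, hU₁, hU₂, fderiv_smul_comp_fst_snd_apply_inl ha₁ hV₁,
    fderiv_smul_comp_fst_snd_apply_inl ha₂ hV₂, fderiv_prodMk_zero_apply hW₁, fderiv_prodMk_zero_apply hW₂]
  simp [lieBracket, smul_sub, smul_smul, mul_comm]

end

/-- Part 2 of Lemma 4.4: for C¹ vector fields `W₁ W₂` on `ℝ^{N+L}` (realized as
`ℝ^N × ℝ^L`) and C¹ scalar functions `a₁ a₂ : ℝ^N → ℝ`, the vector fields
`Uᵢ(φ,z) = aᵢ(z) • (Wᵢ(φ), 0)` on `(ℝ^N × ℝ^L) × ℝ^N` satisfy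
`[U₁,U₂](φ,z) = a₁(z)a₂(z) • ([W₁,W₂](φ), 0)`. -/
theorem stmt4 (N L : ℕ)
    (W₁ W₂ : (Fin N → ℝ) × (Fin L → ℝ) → (Fin N → ℝ) × (Fin L → ℝ))
    (a₁ a₂ : (Fin N → ℝ) → ℝ)
    (hW₁ : ContDiff ℝ 1 W₁) (hW₂ : ContDiff ℝ 1 W₂)
    (ha₁ : ContDiff ℝ 1 a₁) (ha₂ : ContDiff ℝ 1 a₂)
    (φ : (Fin N → ℝ) × (Fin L → ℝ)) (z : Fin N → ℝ) :
    lieBracket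
      (fun p : ((Fin N → ℝ) × (Fin L → ℝ)) × (Fin N → ℝ) =>
        a₁ p.2 • ((W₁ p.1, 0) : ((Fin N → ℝ) × (Fin L → ℝ)) × (Fin N → ℝ)))
      (fun p : ((Fin N → ℝ) × (Fin L → ℝ)) × (Fin N → ℝ) =>
        a₂ p.2 • ((W₂ p.1, 0) : ((Fin N → ℝ) × (Fin L → ℝ)) × (Fin N → ℝ)))
      (φ, z)
    = (a₁ z * a₂ z) • ((lieBracket W₁ W₂ φ, 0) :
        ((Fin N → ℝ) × (Fin L → ℝ)) × (Fin N → ℝ)) :=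
  lieBracket_smul_prodMk_zero (hW₁.differentiable one_ne_zero φ)
    (hW₂.differentiable one_ne_zero φ) (ha₁.differentiable one_ne_zero z)
    (ha₂.differentiable one_ne_zero z)
end
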